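/- arXiv:2409.08640 — 4 statements merged into one kernel-verified Lean document; each statement's English description precedes it below -/
import Mathlib

section
/- Let d ≥ 1, let f : ℝ^d → ℝ be differentiable with L-Lipschitz gradient and lower bounded, with f* = ⨅ f > −∞. Let γ > 0 satisfy γ ≤ 1/(2L), and let x, g : ℕ → ℝ^d be sequences with x^{t+1} = x^t − γ·g^t for all t. Then for every T ≥ 1, (1/T)·∑_{t=0}^{T−1} ‖∇f(x^t)‖² ≤ 2(f(x^0) − f*)/(γT) − (1/(2γ²T))·∑_{t=0}^{T−1} ‖x^{t+1} − x^t‖² + (1/T)·∑_{t=0}^{T−1} ‖g^t − ∇f(x^t)‖². -/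
/-!
With `v = y - x`, the gap `s ↦ f (x + s • v) - s ⟪∇f x, v⟫ - (L / 2) s² ‖v‖²` has derivative
`⟪∇f (x + s • v) - ∇f x, v⟫ - L s ‖v‖² ≤ 0` for `s ≥ 0`, so it decreases on `[0, 1]`: this is the
descent lemma. For a step `x' = x - γ • g` with `L γ ≤ 1/2`, polarization
`-2 ⟪∇f x, g⟫ = ‖g - ∇f x‖² - ‖g‖² - ‖∇f x‖²` turns the descent lemma into a bound of
`‖∇f x‖²` and `‖x' - x‖²` by the decrease of `f` plus the error `‖g - ∇f x‖²`. Summing telescopes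
the decreases into `f x₀ - f x_T ≤ f x₀ - inf f`.
-/

open RealInnerProductSpace Set

variable {E : Type*} [NormedAddCommGroup E] [InnerProductSpace ℝ E] [CompleteSpace E]
  {f : E → ℝ} {L γ : ℝ}

theorem le_add_inner_gradient_add_sq (hf : Differentiable ℝ f)
    (hLip : ∀ a b, ‖gradient f a - gradient f b‖ ≤ L * ‖a - b‖) (x y : E) :
    f y ≤ f x + ⟪gradient f x, y - x⟫ + L / 2 * ‖y - x‖ ^ 2 := by
  set v := y - x
  let φ : ℝ → ℝ := fun s => f (x + s • v) - s * ⟪gradient f x, v⟫ - L / 2 * s ^ 2 * ‖v‖ ^ 2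
  have hφ : ∀ s,
      HasDerivAt φ (⟪gradient f (x + s • v) - gradient f x, v⟫ - L * s * ‖v‖ ^ 2) s := by
    intro s
    have hline : HasDerivAt (fun s : ℝ => x + s • v) v s := by
      simpa using ((hasDerivAt_id s).smul_const v).const_add x
    have hcomp := (hf (x + s • v)).hasGradientAt.hasFDerivAt.comp_hasDerivAt s hline
    refine ((hcomp.sub ((hasDerivAt_id s).mul_const ⟪gradient f x, v⟫)).sub
      (((hasDerivAt_pow 2 s).const_mul (L / 2)).mul_const (‖v‖ ^ 2))).congr_deriv ?_
    rw [InnerProductSpace.toDual_apply_apply, inner_sub_left]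
    push_cast
    ring
  have hgrad_change : ∀ s, 0 ≤ s →
      ⟪gradient f (x + s • v) - gradient f x, v⟫ ≤ L * s * ‖v‖ ^ 2 := fun s hs =>
    calc ⟪gradient f (x + s • v) - gradient f x, v⟫
        _ ≤ ‖gradient f (x + s • v) - gradient f x‖ * ‖v‖ := real_inner_le_norm _ _
        _ ≤ L * ‖x + s • v - x‖ * ‖v‖ := by gcongr; exact hLip _ _
        _ = L * s * ‖v‖ ^ 2 := by
          rw [add_sub_cancel_left, norm_smul, Real.norm_of_nonneg hs]; ring
  have hanti : AntitoneOn φ (Ici 0) :=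
    antitoneOn_of_hasDerivWithinAt_nonpos (convex_Ici 0)
      (fun s _ => (hφ s).continuousAt.continuousWithinAt) (fun s _ => (hφ s).hasDerivWithinAt)
      fun s hs => sub_nonpos.2 (hgrad_change s (interior_subset hs))
  have h01 := hanti self_mem_Ici (mem_Ici.2 zero_le_one) zero_le_one
  simp only [φ, one_smul, zero_smul, add_zero, v, add_sub_cancel] at h01
  linarith

theorem sq_norm_gradient_add_sq_norm_step_le (hf : Differentiable ℝ f)
    (hLip : ∀ a b, ‖gradient f a - gradient f b‖ ≤ L * ‖a - b‖) (hγ : 0 ≤ γ)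
    (hLγ : L * γ ≤ 1 / 2) (x g : E) :
    2 * γ ^ 2 * ‖gradient f x‖ ^ 2 + ‖γ • g‖ ^ 2 ≤
      4 * γ * (f x - f (x - γ • g)) + 2 * γ ^ 2 * ‖g - gradient f x‖ ^ 2 := by
  have hdesc := le_add_inner_gradient_add_sq hf hLip x (x - γ • g)
  rw [sub_sub_cancel_left, inner_neg_right, real_inner_smul_right, norm_neg] at hdesc
  have hpolar : ‖g - gradient f x‖ ^ 2 = ‖g‖ ^ 2 - 2 * ⟪gradient f x, g⟫ + ‖gradient f x‖ ^ 2 := by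
    rw [norm_sub_sq_real, real_inner_comm]
  have hsmul : ‖γ • g‖ ^ 2 = γ ^ 2 * ‖g‖ ^ 2 := by
    rw [norm_smul, mul_pow, Real.norm_of_nonneg hγ]
  have hcubic : 2 * L * γ ^ 3 * ‖g‖ ^ 2 ≤ γ ^ 2 * ‖g‖ ^ 2 := by
    have : 0 ≤ γ ^ 2 * ‖g‖ ^ 2 := by positivity
    nlinarith
  rw [hsmul] at hdesc ⊢
  nlinarith [mul_le_mul_of_nonneg_left hdesc (by positivity : (0 : ℝ) ≤ 4 * γ)]

theorem sum_sq_norm_gradient_add_sum_sq_norm_step_le (hf : Differentiable ℝ f)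
    (hLip : ∀ a b, ‖gradient f a - gradient f b‖ ≤ L * ‖a - b‖) (hγ : 0 ≤ γ)
    (hLγ : L * γ ≤ 1 / 2) (x g : ℕ → E) (hupd : ∀ t, x (t + 1) = x t - γ • g t) (T : ℕ) :
    2 * γ ^ 2 * ∑ t ∈ Finset.range T, ‖gradient f (x t)‖ ^ 2
        + ∑ t ∈ Finset.range T, ‖x (t + 1) - x t‖ ^ 2 ≤
      4 * γ * (f (x 0) - f (x T))
        + 2 * γ ^ 2 * ∑ t ∈ Finset.range T, ‖g t - gradient f (x t)‖ ^ 2 := by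
  have hstep : ∀ t, 2 * γ ^ 2 * ‖gradient f (x t)‖ ^ 2 + ‖x (t + 1) - x t‖ ^ 2 ≤
      4 * γ * (f (x t) - f (x (t + 1))) + 2 * γ ^ 2 * ‖g t - gradient f (x t)‖ ^ 2 := by
    intro t
    rw [hupd t, sub_sub_cancel_left, norm_neg]
    exact sq_norm_gradient_add_sq_norm_step_le hf hLip hγ hLγ (x t) (g t)
  have hsum := Finset.sum_le_sum fun t (_ : t ∈ Finset.range T) => hstep t
  rwa [Finset.sum_add_distrib, Finset.sum_add_distrib, ← Finset.mul_sum, ← Finset.mul_sum,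
    ← Finset.mul_sum, Finset.sum_range_sub' (fun t => f (x t))] at hsum

theorem stmt_1_general (d : ℕ) (f : EuclideanSpace ℝ (Fin d) → ℝ) (L : ℝ)
    (hdiff : Differentiable ℝ f)
    (hLip : ∀ x y, ‖gradient f x - gradient f y‖ ≤ L * ‖x - y‖)
    (hbdd : BddBelow (Set.range f))
    (γ : ℝ) (hγ : 0 < γ) (hγL : γ ≤ 1 / (2 * L))
    (x g : ℕ → EuclideanSpace ℝ (Fin d))
    (hupd : ∀ t, x (t + 1) = x t - γ • g t)
    (T : ℕ) :
    (1 / (T : ℝ)) * ∑ t ∈ Finset.range T, ‖gradient f (x t)‖ ^ 2 ≤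
      2 * (f (x 0) - ⨅ y, f y) / (γ * T)
        - (1 / (2 * γ ^ 2 * T)) * ∑ t ∈ Finset.range T, ‖x (t + 1) - x t‖ ^ 2
        + (1 / (T : ℝ)) * ∑ t ∈ Finset.range T, ‖g t - gradient f (x t)‖ ^ 2 := by
  have hL : 0 < L := by
    by_contra! hL
    have : 1 / (2 * L) ≤ 0 := div_nonpos_of_nonneg_of_nonpos zero_le_one (by linarith)
    linarith
  have hLγ : L * γ ≤ 1 / 2 := by
    rw [le_div_iff₀ (by positivity)] at hγL
    linarith
  have hsum := sum_sq_norm_gradient_add_sum_sq_norm_step_le hdiff hLip hγ.le hLγ x g hupd T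
  have hinf : ⨅ y, f y ≤ f (x T) := ciInf_le hbdd (x T)
  set A := ∑ t ∈ Finset.range T, ‖gradient f (x t)‖ ^ 2
  set B := ∑ t ∈ Finset.range T, ‖x (t + 1) - x t‖ ^ 2
  set D := ∑ t ∈ Finset.range T, ‖g t - gradient f (x t)‖ ^ 2
  have hbound : A ≤ 2 * (f (x 0) - ⨅ y, f y) / γ - B / (2 * γ ^ 2) + D := by
    field_simp
    nlinarith
  calc 1 / (T : ℝ) * A ≤ (T : ℝ)⁻¹ * (2 * (f (x 0) - ⨅ y, f y) / γ - B / (2 * γ ^ 2) + D) := by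
        rw [one_div]; gcongr
    _ = _ := by ring

/-- Summed descent inequality (first step of the proof of Theorem 1). -/
theorem stmt_1 (d : ℕ) (hd : 1 ≤ d) (f : EuclideanSpace ℝ (Fin d) → ℝ) (L : ℝ)
    (hdiff : Differentiable ℝ f)
    (hLip : ∀ x y, ‖gradient f x - gradient f y‖ ≤ L * ‖x - y‖)
    (hbdd : BddBelow (Set.range f))
    (γ : ℝ) (hγ : 0 < γ) (hγL : γ ≤ 1 / (2 * L))
    (x g : ℕ → EuclideanSpace ℝ (Fin d))
    (hupd : ∀ t, x (t + 1) = x t - γ • g t)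
    (T : ℕ) (hT : 1 ≤ T) :
    (1 / (T : ℝ)) * ∑ t ∈ Finset.range T, ‖gradient f (x t)‖ ^ 2 ≤
      2 * (f (x 0) - ⨅ y, f y) / (γ * T)
        - (1 / (2 * γ ^ 2 * T)) * ∑ t ∈ Finset.range T, ‖x (t + 1) - x t‖ ^ 2
        + (1 / (T : ℝ)) * ∑ t ∈ Finset.range T, ‖g t - gradient f (x t)‖ ^ 2 :=
  stmt_1_general d f L hdiff hLip hbdd γ hγ hγL x g hupd T
end

section
/- Let d, n ≥ 1, f < n, κ ≥ 0, and let F : (ℝ^d)^n → ℝ^d be an (f,κ)-robust aggregation rule. Let H ⊆ {1,…,n} with |H| = n − f. Let g_1, …, g_n ∈ ℝ^d, and for i ∈ H let v_i, h_i ∈ ℝ^d. Write C_i = g_i − v_i, M_i = v_i − h_i, and h̄ = (1/(n−f))·∑_{i∈H} h_i, and suppose (1/(n−f))·∑_{i∈H} ‖h_i − h̄‖² ≤ G². Then ‖F(g_1,…,g_n) − ḡ‖² ≤ (6κ(n−f−1)/(n−f)²)·∑_{i∈H} (‖C_i‖² + ‖M_i‖²) + (6κ(n−f−1)/(n−f))·G²,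 where ḡ = (1/(n−f))·∑_{i∈H} g_i. -/
/-!
The robustness inequality bounds the error by `κ / m` times the spread `∑ ‖gᵢ - ḡ‖²` of the
honest vectors, `m = n - f`. Since `gᵢ = Cᵢ + Mᵢ + hᵢ` and centring is linear, the spread of `g`
is at most three times the sum of the spreads of `C`, `M` and `h`; the first two are bounded by
`∑ ‖Cᵢ‖²` and `∑ ‖Mᵢ‖²`, the last by `m G²`. For `m ≥ 2` this gives the claim because
`3 ≤ 6 (m - 1) / m`; for `m = 1` the spread vanishes.
-/

open Finset

theorem norm_add₃_sq_le {E : Type*} [SeminormedAddCommGroup E] (a b c : E) :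
    ‖a + b + c‖ ^ 2 ≤ 3 * (‖a‖ ^ 2 + ‖b‖ ^ 2 + ‖c‖ ^ 2) := by
  have htri : ‖a + b + c‖ ^ 2 ≤ (‖a‖ + ‖b‖ + ‖c‖) ^ 2 :=
    pow_le_pow_left₀ (norm_nonneg _) (norm_add₃_le ..) 2
  nlinarith [sq_nonneg (‖a‖ - ‖b‖), sq_nonneg (‖a‖ - ‖c‖), sq_nonneg (‖b‖ - ‖c‖)]

section Spread

variable {ι E : Type*} [SeminormedAddCommGroup E]

noncomputable def spread [Module ℝ E] (S : Finset ι) (x : ι → E) : ℝ :=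
  ∑ i ∈ S, ‖x i - (#S : ℝ)⁻¹ • ∑ j ∈ S, x j‖ ^ 2

section Module

variable [Module ℝ E]

theorem spread_of_card_eq_one {S : Finset ι} (hS : #S = 1) (x : ι → E) : spread S x = 0 := by
  obtain ⟨i, rfl⟩ := card_eq_one.mp hS
  simp [spread]

theorem spread_add₃_le (S : Finset ι) (x y z : ι → E) :
    spread S (x + y + z) ≤ 3 * (spread S x + spread S y + spread S z) := by
  have hdev : ∀ i, (x + y + z) i - (#S : ℝ)⁻¹ • ∑ j ∈ S, (x + y + z) j =
      (x i - (#S : ℝ)⁻¹ • ∑ j ∈ S, x j) + (y i - (#S : ℝ)⁻¹ • ∑ j ∈ S, y j) +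
        (z i - (#S : ℝ)⁻¹ • ∑ j ∈ S, z j) := by
    intro i
    simp only [Pi.add_apply, sum_add_distrib, smul_add]
    abel
  simp only [spread, hdev, mul_sum, ← sum_add_distrib]
  exact sum_le_sum fun i _ => norm_add₃_sq_le _ _ _

end Module

variable [InnerProductSpace ℝ E]

theorem spread_eq_sum_norm_sq_sub (S : Finset ι) (x : ι → E) :
    spread S x = ∑ i ∈ S, ‖x i‖ ^ 2 - (#S : ℝ)⁻¹ * ‖∑ j ∈ S, x j‖ ^ 2 := by
  rcases S.eq_empty_or_nonempty with rfl | hS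
  · simp [spread]
  have hcard : (#S : ℝ) ≠ 0 := by exact_mod_cast hS.card_pos.ne'
  set s := ∑ j ∈ S, x j
  have hexpand : ∀ i ∈ S, ‖x i - (#S : ℝ)⁻¹ • s‖ ^ 2 =
      ‖x i‖ ^ 2 - 2 * (#S : ℝ)⁻¹ * inner ℝ (x i) s + (#S : ℝ)⁻¹ ^ 2 * ‖s‖ ^ 2 := by
    intro i _
    rw [norm_sub_sq_real, real_inner_smul_right, norm_smul, Real.norm_eq_abs,
      abs_of_nonneg (by positivity), mul_pow]
    ring
  rw [spread, sum_congr rfl hexpand, sum_add_distrib, sum_sub_distrib, ← mul_sum, ← sum_inner,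
    real_inner_self_eq_norm_sq, sum_const, nsmul_eq_mul]
  field_simp
  ring

theorem spread_le_sum_norm_sq (S : Finset ι) (x : ι → E) :
    spread S x ≤ ∑ i ∈ S, ‖x i‖ ^ 2 := by
  rw [spread_eq_sum_norm_sq_sub]
  have : 0 ≤ (#S : ℝ)⁻¹ * ‖∑ j ∈ S, x j‖ ^ 2 := by positivity
  linarith

end Spread

theorem three_div_mul_le_of_two_le {κ m A B : ℝ} (hκ : 0 ≤ κ) (hm : 2 ≤ m) (hA : 0 ≤ A)
    (hB : 0 ≤ B) :
    κ / m * (3 * (A + m * B)) ≤ 6 * κ * (m - 1) / m ^ 2 * A + 6 * κ * (m - 1) / m * B := by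
  have hm0 : 0 < m := by linarith
  have hcoef : 3 * κ ≤ 6 * κ * (m - 1) / m := by
    rw [le_div_iff₀ hm0]
    nlinarith [mul_nonneg hκ (by linarith : (0 : ℝ) ≤ m - 2)]
  have hsplit : κ / m * (3 * (A + m * B)) = 3 * κ / m * A + 3 * κ * B := by
    field_simp
  have hdiv : 6 * κ * (m - 1) / m ^ 2 = 6 * κ * (m - 1) / m / m := by ring
  rw [hsplit, hdiv]
  gcongr

theorem stmt_2_general (d n f : ℕ) (hfn : f < n)
    (κ : ℝ) (hκ : 0 ≤ κ)
    (F : (Fin n → EuclideanSpace ℝ (Fin d)) → EuclideanSpace ℝ (Fin d))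
    (hF : ∀ (u : Fin n → EuclideanSpace ℝ (Fin d)) (S : Finset (Fin n)),
      S.card = n - f →
      ‖F u - ((n : ℝ) - f)⁻¹ • ∑ i ∈ S, u i‖ ^ 2 ≤
        (κ / ((n : ℝ) - f)) * ∑ i ∈ S, ‖u i - ((n : ℝ) - f)⁻¹ • ∑ j ∈ S, u j‖ ^ 2)
    (H : Finset (Fin n)) (hH : H.card = n - f)
    (g v h : Fin n → EuclideanSpace ℝ (Fin d)) (G : ℝ)
    (hhet : ((n : ℝ) - f)⁻¹ *
        ∑ i ∈ H, ‖h i - ((n : ℝ) - f)⁻¹ • ∑ j ∈ H, h j‖ ^ 2 ≤ G ^ 2) :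
    ‖F g - ((n : ℝ) - f)⁻¹ • ∑ i ∈ H, g i‖ ^ 2 ≤
      (6 * κ * ((n : ℝ) - f - 1) / ((n : ℝ) - f) ^ 2) *
          ∑ i ∈ H, (‖g i - v i‖ ^ 2 + ‖v i - h i‖ ^ 2)
        + (6 * κ * ((n : ℝ) - f - 1) / ((n : ℝ) - f)) * G ^ 2 := by
  have hcard : (#H : ℝ) = (n : ℝ) - f := by rw [hH, Nat.cast_sub hfn.le]
  have hrobust := hF g H hH
  rw [← hcard] at hrobust hhet ⊢
  change _ ≤ κ / #H * spread H g at hrobust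
  change (#H : ℝ)⁻¹ * spread H h ≤ G ^ 2 at hhet
  rcases (show #H = 1 ∨ 2 ≤ #H by omega) with hone | htwo
  · rw [spread_of_card_eq_one hone, mul_zero] at hrobust
    refine hrobust.trans (le_of_eq ?_)
    simp [hone]
  have hm : (2 : ℝ) ≤ #H := by exact_mod_cast htwo
  have hspread_h : spread H h ≤ #H * G ^ 2 := by
    rwa [inv_mul_le_iff₀ (by positivity)] at hhet
  have hspread_g : spread H g ≤
      3 * (∑ i ∈ H, ‖g i - v i‖ ^ 2 + ∑ i ∈ H, ‖v i - h i‖ ^ 2 + #H * G ^ 2) := by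
    calc spread H g = spread H ((g - v) + (v - h) + h) := by
          rw [sub_add_sub_cancel, sub_add_cancel]
      _ ≤ _ := spread_add₃_le H _ _ _
      _ ≤ _ := by
        gcongr
        · exact spread_le_sum_norm_sq H (g - v)
        · exact spread_le_sum_norm_sq H (v - h)
  rw [sum_add_distrib]
  calc _ ≤ κ / #H * spread H g := hrobust
    _ ≤ κ / #H * (3 * (∑ i ∈ H, ‖g i - v i‖ ^ 2 + ∑ i ∈ H, ‖v i - h i‖ ^ 2 + #H * G ^ 2)) := by
        gcongr
    _ ≤ _ := three_div_mul_le_of_two_le hκ hm (by positivity) (sq_nonneg G)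

/-- Lemma 2 (robust aggregation error). -/
theorem stmt_2 (d n f : ℕ) (hd : 1 ≤ d) (hn : 1 ≤ n) (hfn : f < n)
    (κ : ℝ) (hκ : 0 ≤ κ)
    (F : (Fin n → EuclideanSpace ℝ (Fin d)) → EuclideanSpace ℝ (Fin d))
    (hF : ∀ (u : Fin n → EuclideanSpace ℝ (Fin d)) (S : Finset (Fin n)),
      S.card = n - f →
      ‖F u - ((n : ℝ) - f)⁻¹ • ∑ i ∈ S, u i‖ ^ 2 ≤
        (κ / ((n : ℝ) - f)) * ∑ i ∈ S, ‖u i - ((n : ℝ) - f)⁻¹ • ∑ j ∈ S, u j‖ ^ 2)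
    (H : Finset (Fin n)) (hH : H.card = n - f)
    (g v h : Fin n → EuclideanSpace ℝ (Fin d)) (G : ℝ)
    (hhet : ((n : ℝ) - f)⁻¹ *
        ∑ i ∈ H, ‖h i - ((n : ℝ) - f)⁻¹ • ∑ j ∈ H, h j‖ ^ 2 ≤ G ^ 2) :
    ‖F g - ((n : ℝ) - f)⁻¹ • ∑ i ∈ H, g i‖ ^ 2 ≤
      (6 * κ * ((n : ℝ) - f - 1) / ((n : ℝ) - f) ^ 2) *
          ∑ i ∈ H, (‖g i - v i‖ ^ 2 + ‖v i - h i‖ ^ 2)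
        + (6 * κ * ((n : ℝ) - f - 1) / ((n : ℝ) - f)) * G ^ 2 :=
  stmt_2_general d n f hfn κ hκ F hF H hH g v h G hhet
end

section
/- Let d, n ≥ 1, f < n, κ ≥ 0, and let F : (ℝ^d)^n → ℝ^d be an (f,κ)-robust aggregation rule. Let H ⊆ {1,…,n} with |H| = n − f ≥ 1. Let g_1, …, g_n ∈ ℝ^d and, for i ∈ H, let v_i, h_i ∈ ℝ^d; write C_i = g_i − v_i, M_i = v_i − h_i, h̄ = (1/(n−f))·∑_{i∈H} h_i, v̄ = (1/(n−f))·∑_{i∈H} v_i, and suppose (1/(n−f))·∑_{i∈H} ‖h_i − h̄‖² ≤ G². Then ‖F(g_1,…,g_n) − h̄‖² ≤ (3(6κ+1)/(n−f))·∑_{i∈H} ‖C_i‖² + (18κ/(n−f))·∑_{i∈H} ‖M_i‖² + 3‖v̄ − h̄‖² + 18κ·G². -/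
/-!
The aggregation error is split as `F g - h̄ = (F g - ḡ) + (ḡ - v̄) + (v̄ - h̄)`, each piece costing a
factor `3`. Robustness bounds the first piece by the spread of the `g i` around their mean; since the
mean minimises the sum of squared distances, that spread is at most the spread around `h̄`, which
splits again into the `C_i`, the `M_i` and the heterogeneity of the `h_i`. The second piece is
controlled by Jensen's inequality for `‖·‖²`.
-/

open Finset

section SeminormedAddCommGroup

variable {ι E : Type*} [SeminormedAddCommGroup E]

theorem norm_sum_sq_le_card_mul_sum_norm_sq (s : Finset ι) (x : ι → E) :
    ‖∑ i ∈ s, x i‖ ^ 2 ≤ #s * ∑ i ∈ s, ‖x i‖ ^ 2 :=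
  (pow_le_pow_left₀ (norm_nonneg _) (norm_sum_le _ _) 2).trans sq_sum_le_card_mul_sum_sq

theorem norm_add_add_sq_le (a b c : E) :
    ‖a + b + c‖ ^ 2 ≤ 3 * (‖a‖ ^ 2 + ‖b‖ ^ 2 + ‖c‖ ^ 2) := by
  simpa [Fin.sum_univ_three, add_assoc] using norm_sum_sq_le_card_mul_sum_norm_sq univ ![a, b, c]

variable [NormedSpace ℝ E]

theorem norm_inv_card_smul_sum_sq_le (s : Finset ι) (x : ι → E) :
    ‖(#s : ℝ)⁻¹ • ∑ i ∈ s, x i‖ ^ 2 ≤ (#s : ℝ)⁻¹ * ∑ i ∈ s, ‖x i‖ ^ 2 := by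
  rw [norm_smul, mul_pow, norm_inv, Real.norm_natCast]
  calc (#s : ℝ)⁻¹ ^ 2 * ‖∑ i ∈ s, x i‖ ^ 2
      ≤ (#s : ℝ)⁻¹ ^ 2 * (#s * ∑ i ∈ s, ‖x i‖ ^ 2) := by
        gcongr; exact norm_sum_sq_le_card_mul_sum_norm_sq s x
    _ = (#s : ℝ)⁻¹ * ∑ i ∈ s, ‖x i‖ ^ 2 := by grind

theorem sum_sub_inv_card_smul_sum_eq_zero (s : Finset ι) (x : ι → E) :
    ∑ i ∈ s, (x i - (#s : ℝ)⁻¹ • ∑ j ∈ s, x j) = 0 := by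
  rcases s.eq_empty_or_nonempty with rfl | hs
  · simp
  rw [sum_sub_distrib, sum_const, ← Nat.cast_smul_eq_nsmul ℝ, smul_smul,
    mul_inv_cancel₀ (by exact_mod_cast hs.card_pos.ne'), one_smul, sub_self]

end SeminormedAddCommGroup

section InnerProductSpace

variable {ι E : Type*} [NormedAddCommGroup E] [InnerProductSpace ℝ E]

theorem sum_norm_sub_sq_eq (s : Finset ι) (x : ι → E) (c : E) :
    ∑ i ∈ s, ‖x i - c‖ ^ 2 =
      ∑ i ∈ s, ‖x i - (#s : ℝ)⁻¹ • ∑ j ∈ s, x j‖ ^ 2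
        + #s * ‖(#s : ℝ)⁻¹ • ∑ j ∈ s, x j - c‖ ^ 2 := by
  set xbar := (#s : ℝ)⁻¹ • ∑ j ∈ s, x j
  have hsplit : ∀ i, ‖x i - c‖ ^ 2
      = ‖x i - xbar‖ ^ 2 + 2 * inner ℝ (x i - xbar) (xbar - c) + ‖xbar - c‖ ^ 2 := fun i => by
    rw [← norm_add_sq_real, sub_add_sub_cancel]
  have hcentered : ∑ i ∈ s, (x i - xbar) = 0 := sum_sub_inv_card_smul_sum_eq_zero s x
  simp only [hsplit, sum_add_distrib, ← mul_sum, ← sum_inner, hcentered, inner_zero_left, sum_const,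
    nsmul_eq_mul]
  ring

theorem sum_norm_sub_inv_card_smul_sum_sq_le (s : Finset ι) (x : ι → E) (c : E) :
    ∑ i ∈ s, ‖x i - (#s : ℝ)⁻¹ • ∑ j ∈ s, x j‖ ^ 2 ≤ ∑ i ∈ s, ‖x i - c‖ ^ 2 := by
  rw [sum_norm_sub_sq_eq s x c]
  exact le_add_of_nonneg_right (by positivity)

theorem sum_norm_sub_inv_card_smul_sum_sq_le_three_mul (s : Finset ι) (g v h : ι → E) :
    ∑ i ∈ s, ‖g i - (#s : ℝ)⁻¹ • ∑ j ∈ s, g j‖ ^ 2 ≤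
      3 * (∑ i ∈ s, ‖g i - v i‖ ^ 2 + ∑ i ∈ s, ‖v i - h i‖ ^ 2
        + ∑ i ∈ s, ‖h i - (#s : ℝ)⁻¹ • ∑ j ∈ s, h j‖ ^ 2) := by
  set hbar := (#s : ℝ)⁻¹ • ∑ j ∈ s, h j
  calc _ ≤ ∑ i ∈ s, ‖g i - hbar‖ ^ 2 := sum_norm_sub_inv_card_smul_sum_sq_le s g hbar
    _ ≤ ∑ i ∈ s, 3 * (‖g i - v i‖ ^ 2 + ‖v i - h i‖ ^ 2 + ‖h i - hbar‖ ^ 2) := by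
        gcongr with i
        simpa only [sub_add_sub_cancel] using norm_add_add_sq_le (g i - v i) (v i - h i) (h i - hbar)
    _ = _ := by simp only [← mul_sum, sum_add_distrib]

theorem norm_sub_inv_card_smul_sum_sq_le_of_robust {s : Finset ι} {κ G : ℝ} (hκ : 0 ≤ κ)
    {y : E} {g h : ι → E} (v : ι → E)
    (hy : ‖y - (#s : ℝ)⁻¹ • ∑ i ∈ s, g i‖ ^ 2 ≤
      (κ / #s) * ∑ i ∈ s, ‖g i - (#s : ℝ)⁻¹ • ∑ j ∈ s, g j‖ ^ 2)
    (hhet : (#s : ℝ)⁻¹ * ∑ i ∈ s, ‖h i - (#s : ℝ)⁻¹ • ∑ j ∈ s, h j‖ ^ 2 ≤ G ^ 2) :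
    ‖y - (#s : ℝ)⁻¹ • ∑ i ∈ s, h i‖ ^ 2 ≤
      (3 * (6 * κ + 1) / #s) * ∑ i ∈ s, ‖g i - v i‖ ^ 2
        + (18 * κ / #s) * ∑ i ∈ s, ‖v i - h i‖ ^ 2
        + 3 * ‖(#s : ℝ)⁻¹ • (∑ i ∈ s, v i) - (#s : ℝ)⁻¹ • ∑ i ∈ s, h i‖ ^ 2
        + 18 * κ * G ^ 2 := by
  set m : ℝ := (#s : ℝ)
  set gbar := m⁻¹ • ∑ i ∈ s, g i
  set vbar := m⁻¹ • ∑ i ∈ s, v i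
  set hbar := m⁻¹ • ∑ i ∈ s, h i
  set SC := ∑ i ∈ s, ‖g i - v i‖ ^ 2
  set SM := ∑ i ∈ s, ‖v i - h i‖ ^ 2
  set SH := ∑ i ∈ s, ‖h i - hbar‖ ^ 2
  have hsplit : ‖y - hbar‖ ^ 2 ≤ 3 * (‖y - gbar‖ ^ 2 + ‖gbar - vbar‖ ^ 2 + ‖vbar - hbar‖ ^ 2) := by
    simpa only [sub_add_sub_cancel] using norm_add_add_sq_le (y - gbar) (gbar - vbar) (vbar - hbar)
  have hrobust : ‖y - gbar‖ ^ 2 ≤ κ * m⁻¹ * (3 * (SC + SM + SH)) := by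
    rw [← div_eq_mul_inv]
    exact hy.trans (by gcongr; exact sum_norm_sub_inv_card_smul_sum_sq_le_three_mul s g v h)
  have hjensen : ‖gbar - vbar‖ ^ 2 ≤ m⁻¹ * SC := by
    simpa only [gbar, vbar, ← smul_sub, ← sum_sub_distrib] using
      norm_inv_card_smul_sum_sq_le s (fun i => g i - v i)
  have hκhet : κ * (m⁻¹ * SH) ≤ κ * G ^ 2 := mul_le_mul_of_nonneg_left hhet hκ
  have hC : 0 ≤ κ * m⁻¹ * SC := by positivity
  have hM : 0 ≤ κ * m⁻¹ * SM := by positivity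
  have hG : 0 ≤ κ * G ^ 2 := by positivity
  simp only [div_eq_mul_inv]
  linarith

end InnerProductSpace

theorem stmt_6_general (d n f : ℕ) (hfn : f < n)
    (κ : ℝ) (hκ : 0 ≤ κ)
    (F : (Fin n → EuclideanSpace ℝ (Fin d)) → EuclideanSpace ℝ (Fin d))
    (hF : ∀ (u : Fin n → EuclideanSpace ℝ (Fin d)) (S : Finset (Fin n)),
      S.card = n - f →
      ‖F u - ((n : ℝ) - f)⁻¹ • ∑ i ∈ S, u i‖ ^ 2 ≤
        (κ / ((n : ℝ) - f)) * ∑ i ∈ S, ‖u i - ((n : ℝ) - f)⁻¹ • ∑ j ∈ S, u j‖ ^ 2)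
    (H : Finset (Fin n)) (hH : H.card = n - f)
    (g v h : Fin n → EuclideanSpace ℝ (Fin d)) (G : ℝ)
    (hhet : ((n : ℝ) - f)⁻¹ *
        ∑ i ∈ H, ‖h i - ((n : ℝ) - f)⁻¹ • ∑ j ∈ H, h j‖ ^ 2 ≤ G ^ 2) :
    ‖F g - ((n : ℝ) - f)⁻¹ • ∑ i ∈ H, h i‖ ^ 2 ≤
      (3 * (6 * κ + 1) / ((n : ℝ) - f)) * ∑ i ∈ H, ‖g i - v i‖ ^ 2
        + (18 * κ / ((n : ℝ) - f)) * ∑ i ∈ H, ‖v i - h i‖ ^ 2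
        + 3 * ‖((n : ℝ) - f)⁻¹ • (∑ i ∈ H, v i) - ((n : ℝ) - f)⁻¹ • ∑ i ∈ H, h i‖ ^ 2
        + 18 * κ * G ^ 2 := by
  have hcard : (n : ℝ) - f = #H := by rw [hH, Nat.cast_sub hfn.le]
  have hrobust := hF g H hH
  rw [hcard] at hrobust hhet ⊢
  exact norm_sub_inv_card_smul_sum_sq_le_of_robust hκ v hrobust hhet

/-- Combined aggregation-error bound from the proof of Theorem 1. -/
theorem stmt_6 (d n f : ℕ) (hd : 1 ≤ d) (hn : 1 ≤ n) (hfn : f < n)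
    (κ : ℝ) (hκ : 0 ≤ κ)
    (F : (Fin n → EuclideanSpace ℝ (Fin d)) → EuclideanSpace ℝ (Fin d))
    (hF : ∀ (u : Fin n → EuclideanSpace ℝ (Fin d)) (S : Finset (Fin n)),
      S.card = n - f →
      ‖F u - ((n : ℝ) - f)⁻¹ • ∑ i ∈ S, u i‖ ^ 2 ≤
        (κ / ((n : ℝ) - f)) * ∑ i ∈ S, ‖u i - ((n : ℝ) - f)⁻¹ • ∑ j ∈ S, u j‖ ^ 2)
    (H : Finset (Fin n)) (hH : H.card = n - f)
    (g v h : Fin n → EuclideanSpace ℝ (Fin d)) (G : ℝ)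
    (hhet : ((n : ℝ) - f)⁻¹ *
        ∑ i ∈ H, ‖h i - ((n : ℝ) - f)⁻¹ • ∑ j ∈ H, h j‖ ^ 2 ≤ G ^ 2) :
    ‖F g - ((n : ℝ) - f)⁻¹ • ∑ i ∈ H, h i‖ ^ 2 ≤
      (3 * (6 * κ + 1) / ((n : ℝ) - f)) * ∑ i ∈ H, ‖g i - v i‖ ^ 2
        + (18 * κ / ((n : ℝ) - f)) * ∑ i ∈ H, ‖v i - h i‖ ^ 2
        + 3 * ‖((n : ℝ) - f)⁻¹ • (∑ i ∈ H, v i) - ((n : ℝ) - f)⁻¹ • ∑ i ∈ H, h i‖ ^ 2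
        + 18 * κ * G ^ 2 :=
  stmt_6_general d n f hfn κ hκ F hF H hH g v h G hhet
end

section
/- Let d ≥ 1, α ∈ (0,1], η ∈ (0,1], σ ≥ 0, L_i ≥ 0. Let (Ω₁, μ₁) and (Ω₂, μ₂) be probability spaces. Let 𝒞 : ℝ^d → Ω₂ → ℝ^d be such that for every z ∈ ℝ^d, ω ↦ 𝒞(z)(ω) is measurable and ∫_{Ω₂} ‖𝒞(z)(ω) − z‖² dμ₂(ω) ≤ (1−α)‖z‖². Let ℒ : ℝ^d → ℝ be differentiable with L_i-Lipschitz gradient. Fix x₀, x, v₀, g₀ ∈ ℝ^d and let s : Ω₁ → ℝ^d be square-integrable with ∫_{Ω₁} s dμ₁ = ∇ℒ(x) and ∫_{Ω₁} ‖s(ω) − ∇ℒ(x)‖² dμ₁(ω) ≤ σ². Define v(ω₁) = (1−η)v₀ + η·s(ω₁) and g(ω₁,ω₂) = g₀ + 𝒞(v(ω₁) − g₀)(ω₂). Then ∫_{Ω₁×Ω₂} ‖g(ω₁,ω₂) − v(ω₁)‖² d(μ₁ × μ₂) ≤ (1 − α/2)·‖g₀ − v₀‖² + (4η²/α)·‖v₀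 − ∇ℒ(x₀)‖² + (4η²L_i²/α)·‖x − x₀‖² + (1−α)·η²σ². -/
/-!
Write the compressor input as `z = m + η • (s - ∇ℒ x)` with deterministic drift
`m = (v₀ - g₀) + η • (∇ℒ x - v₀)` and centred noise. Integrating out the compressor first
(Fubini) gives the factor `1 - α` in front of `E‖z‖² = ‖m‖² + η² E‖s - ∇ℒ x‖²`. Young's
inequality with parameter `α/2` turns `(1 - α)‖m‖²` into
`(1 - α/2)‖v₀ - g₀‖² + (2/α) η² ‖∇ℒ x - v₀‖²`, and the last norm is split at `∇ℒ x₀`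
and bounded with the Lipschitz gradient.
-/

open MeasureTheory

theorem norm_add_sq_le_young {E : Type*} [SeminormedAddCommGroup E] (a b : E) {β : ℝ}
    (hβ : 0 < β) : ‖a + b‖ ^ 2 ≤ (1 + β) * ‖a‖ ^ 2 + (1 + β⁻¹) * ‖b‖ ^ 2 := by
  have hsq : (‖a‖ + ‖b‖) ^ 2 ≤ (1 + β) * ‖a‖ ^ 2 + (1 + β⁻¹) * ‖b‖ ^ 2 := by
    have key : (1 + β) * ‖a‖ ^ 2 + (1 + β⁻¹) * ‖b‖ ^ 2 - (‖a‖ + ‖b‖) ^ 2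
        = (β * ‖a‖ - ‖b‖) ^ 2 / β := by
      field_simp; ring
    have : 0 ≤ (β * ‖a‖ - ‖b‖) ^ 2 / β := by positivity
    linarith
  exact (pow_le_pow_left₀ (norm_nonneg _) (norm_add_le a b) 2).trans hsq

theorem one_sub_mul_norm_add_sq_le {E : Type*} [SeminormedAddCommGroup E] (a b : E) {α : ℝ}
    (hα₀ : 0 < α) (hα₁ : α ≤ 1) :
    (1 - α) * ‖a + b‖ ^ 2 ≤ (1 - α / 2) * ‖a‖ ^ 2 + 2 / α * ‖b‖ ^ 2 := by
  have hyoung := norm_add_sq_le_young a b (half_pos hα₀)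
  have ha : (1 - α) * (1 + α / 2) ≤ 1 - α / 2 := by nlinarith
  have hb : (1 - α) * (1 + (α / 2)⁻¹) ≤ 2 / α := by
    rw [inv_div, ← sub_nonneg]
    have : 2 / α - (1 - α) * (1 + 2 / α) = 1 + α := by field_simp; ring
    rw [this]; linarith
  calc (1 - α) * ‖a + b‖ ^ 2
      ≤ (1 - α) * ((1 + α / 2) * ‖a‖ ^ 2 + (1 + (α / 2)⁻¹) * ‖b‖ ^ 2) :=
        mul_le_mul_of_nonneg_left hyoung (by linarith)
    _ = (1 - α) * (1 + α / 2) * ‖a‖ ^ 2 + (1 - α) * (1 + (α / 2)⁻¹) * ‖b‖ ^ 2 := by ring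
    _ ≤ (1 - α / 2) * ‖a‖ ^ 2 + 2 / α * ‖b‖ ^ 2 := by gcongr

theorem norm_sub_sq_le_of_lipschitz {E F : Type*} [SeminormedAddCommGroup E]
    [SeminormedAddCommGroup F] {f : E → F} {L : ℝ} (hf : ∀ x y, ‖f x - f y‖ ≤ L * ‖x - y‖)
    (x x₀ : E) (v : F) :
    ‖f x - v‖ ^ 2 ≤ 2 * ‖v - f x₀‖ ^ 2 + 2 * L ^ 2 * ‖x - x₀‖ ^ 2 := by
  have hlip : ‖f x - f x₀‖ ^ 2 ≤ L ^ 2 * ‖x - x₀‖ ^ 2 := by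
    rw [← mul_pow]; exact pow_le_pow_left₀ (norm_nonneg _) (hf x x₀) 2
  calc ‖f x - v‖ ^ 2 = ‖(f x - f x₀) + (f x₀ - v)‖ ^ 2 := by rw [sub_add_sub_cancel]
    _ ≤ (1 + 1) * ‖f x - f x₀‖ ^ 2 + (1 + 1⁻¹) * ‖f x₀ - v‖ ^ 2 :=
        norm_add_sq_le_young _ _ one_pos
    _ ≤ 2 * ‖v - f x₀‖ ^ 2 + 2 * L ^ 2 * ‖x - x₀‖ ^ 2 := by
        rw [norm_sub_rev (f x₀) v]; norm_num; linarith

section Integrals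

variable {Ω Ω₁ Ω₂ : Type*} [MeasurableSpace Ω] [MeasurableSpace Ω₁] [MeasurableSpace Ω₂]

theorem integral_prod_norm_apply_sub_sq_le {E : Type*} [NormedAddCommGroup E]
    (μ₁ : Measure Ω₁) (μ₂ : Measure Ω₂) [SFinite μ₁] [SFinite μ₂]
    (C : E → Ω₂ → E) {c : ℝ} (hc : 0 ≤ c) (hC : ∀ z, ∫ ω, ‖C z ω - z‖ ^ 2 ∂μ₂ ≤ c * ‖z‖ ^ 2)
    (z : Ω₁ → E) (hz : Integrable (fun ω => ‖z ω‖ ^ 2) μ₁) :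
    ∫ ω, ‖C (z ω.1) ω.2 - z ω.1‖ ^ 2 ∂(μ₁.prod μ₂) ≤ c * ∫ ω, ‖z ω‖ ^ 2 ∂μ₁ := by
  by_cases hint : Integrable (fun ω : Ω₁ × Ω₂ => ‖C (z ω.1) ω.2 - z ω.1‖ ^ 2) (μ₁.prod μ₂)
  · rw [integral_prod _ hint, ← integral_const_mul]
    exact integral_mono hint.integral_prod_left (hz.const_mul c) fun ω => hC (z ω)
  · rw [integral_undef hint]
    exact mul_nonneg hc (integral_nonneg fun ω => sq_nonneg _)

theorem integral_norm_add_sq_of_integral_eq_zero {E : Type*} [NormedAddCommGroup E]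
    [InnerProductSpace ℝ E] [CompleteSpace E] (μ : Measure Ω) [IsProbabilityMeasure μ]
    (m : E) {e : Ω → E} (he : MemLp e 2 μ) (hmean : ∫ ω, e ω ∂μ = 0) :
    ∫ ω, ‖m + e ω‖ ^ 2 ∂μ = ‖m‖ ^ 2 + ∫ ω, ‖e ω‖ ^ 2 ∂μ := by
  have hcross : Integrable (fun ω => 2 * inner ℝ m (e ω)) μ :=
    ((he.integrable one_le_two).const_inner m).const_mul 2
  have hsq : Integrable (fun ω => ‖e ω‖ ^ 2) μ := he.integrable_norm_pow two_ne_zero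
  simp_rw [norm_add_sq_real]
  have hconst_cross : Integrable (fun ω => ‖m‖ ^ 2 + 2 * inner ℝ m (e ω)) μ :=
    (integrable_const _).add hcross
  rw [integral_add hconst_cross hsq, integral_add (integrable_const _) hcross, integral_const_mul,
    integral_inner (he.integrable one_le_two), hmean]
  simp

theorem integral_norm_add_smul_sub_sq_le {E : Type*} [NormedAddCommGroup E]
    [InnerProductSpace ℝ E] [CompleteSpace E] (μ : Measure Ω) [IsProbabilityMeasure μ]
    (m : E) (η : ℝ) {s : Ω → E} {G : E} {σ : ℝ} (hs : MemLp s 2 μ)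
    (hmean : ∫ ω, s ω ∂μ = G) (hvar : ∫ ω, ‖s ω - G‖ ^ 2 ∂μ ≤ σ ^ 2) :
    ∫ ω, ‖m + η • (s ω - G)‖ ^ 2 ∂μ ≤ ‖m‖ ^ 2 + η ^ 2 * σ ^ 2 := by
  have hcentred : ∫ ω, η • (s ω - G) ∂μ = 0 := by
    rw [integral_smul, integral_sub (hs.integrable one_le_two) (integrable_const G), hmean,
      integral_const, probReal_univ, one_smul, sub_self, smul_zero]
  rw [integral_norm_add_sq_of_integral_eq_zero (e := fun ω => η • (s ω - G)) μ m
    ((hs.sub (memLp_const G)).const_smul η) hcentred]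
  simp_rw [norm_smul, mul_pow, Real.norm_eq_abs, sq_abs]
  rw [integral_const_mul]
  gcongr

end Integrals

theorem stmt_7_general (d : ℕ) (α η σ Li : ℝ)
    (hα : α ∈ Set.Ioc (0 : ℝ) 1)
    {Ω₁ Ω₂ : Type*} [MeasurableSpace Ω₁] [MeasurableSpace Ω₂]
    (μ₁ : Measure Ω₁) (μ₂ : Measure Ω₂)
    [IsProbabilityMeasure μ₁] [IsProbabilityMeasure μ₂]
    (C : EuclideanSpace ℝ (Fin d) → Ω₂ → EuclideanSpace ℝ (Fin d))
    (hC : ∀ z, ∫ ω, ‖C z ω - z‖ ^ 2 ∂μ₂ ≤ (1 - α) * ‖z‖ ^ 2)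
    (ℒ : EuclideanSpace ℝ (Fin d) → ℝ)
    (hLip : ∀ x y, ‖gradient ℒ x - gradient ℒ y‖ ≤ Li * ‖x - y‖)
    (x₀ x v₀ g₀ : EuclideanSpace ℝ (Fin d))
    (s : Ω₁ → EuclideanSpace ℝ (Fin d))
    (hs2 : MemLp s 2 μ₁)
    (hsmean : ∫ ω, s ω ∂μ₁ = gradient ℒ x)
    (hsvar : ∫ ω, ‖s ω - gradient ℒ x‖ ^ 2 ∂μ₁ ≤ σ ^ 2) :
    ∫ ω : Ω₁ × Ω₂,
        ‖(g₀ + C ((1 - η) • v₀ + η • s ω.1 - g₀) ω.2)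
            - ((1 - η) • v₀ + η • s ω.1)‖ ^ 2 ∂(μ₁.prod μ₂) ≤
      (1 - α / 2) * ‖g₀ - v₀‖ ^ 2 + (4 * η ^ 2 / α) * ‖v₀ - gradient ℒ x₀‖ ^ 2
        + (4 * η ^ 2 * Li ^ 2 / α) * ‖x - x₀‖ ^ 2 + (1 - α) * η ^ 2 * σ ^ 2 := by
  obtain ⟨hα₀, hα₁⟩ := hα
  set G := gradient ℒ x
  set m := (v₀ - g₀) + η • (G - v₀)
  set z := fun ω => m + η • (s ω - G)
  have hinput : ∀ ω, (1 - η) • v₀ + η • s ω - g₀ = z ω := fun ω => by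
    simp only [z, m]; module
  have herror : ∀ ω : Ω₁ × Ω₂, (g₀ + C ((1 - η) • v₀ + η • s ω.1 - g₀) ω.2)
      - ((1 - η) • v₀ + η • s ω.1) = C (z ω.1) ω.2 - z ω.1 := fun ω => by
    rw [← hinput]; abel
  have hz : Integrable (fun ω => ‖z ω‖ ^ 2) μ₁ :=
    ((memLp_const m).add ((hs2.sub (memLp_const G)).const_smul η)).integrable_norm_pow
      two_ne_zero
  simp_rw [herror]
  calc _ ≤ (1 - α) * ∫ ω, ‖z ω‖ ^ 2 ∂μ₁ :=
        integral_prod_norm_apply_sub_sq_le μ₁ μ₂ C (by linarith) hC z hz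
    _ ≤ (1 - α) * ‖m‖ ^ 2 + (1 - α) * η ^ 2 * σ ^ 2 := by
        have := mul_le_mul_of_nonneg_left
          (integral_norm_add_smul_sub_sq_le μ₁ m η hs2 hsmean hsvar) (by linarith : 0 ≤ 1 - α)
        linarith
    _ ≤ (1 - α / 2) * ‖v₀ - g₀‖ ^ 2 + 2 / α * ‖η • (G - v₀)‖ ^ 2
          + (1 - α) * η ^ 2 * σ ^ 2 := by
        gcongr; exact one_sub_mul_norm_add_sq_le _ _ hα₀ hα₁
    _ ≤ (1 - α / 2) * ‖g₀ - v₀‖ ^ 2 + 2 / α * (η ^ 2 * (2 * ‖v₀ - gradient ℒ x₀‖ ^ 2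
          + 2 * Li ^ 2 * ‖x - x₀‖ ^ 2)) + (1 - α) * η ^ 2 * σ ^ 2 := by
        rw [norm_sub_rev v₀ g₀, norm_smul, mul_pow, Real.norm_eq_abs, sq_abs]
        gcongr
        exact norm_sub_sq_le_of_lipschitz hLip x x₀ v₀
    _ = _ := by ring

/-- One-step compression-error recursion (proof of Lemma 3). -/
theorem stmt_7 (d : ℕ) (hd : 1 ≤ d) (α η σ Li : ℝ)
    (hα : α ∈ Set.Ioc (0 : ℝ) 1) (hη : η ∈ Set.Ioc (0 : ℝ) 1)
    (hσ : 0 ≤ σ) (hLi : 0 ≤ Li)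
    {Ω₁ Ω₂ : Type*} [MeasurableSpace Ω₁] [MeasurableSpace Ω₂]
    (μ₁ : Measure Ω₁) (μ₂ : Measure Ω₂)
    [IsProbabilityMeasure μ₁] [IsProbabilityMeasure μ₂]
    (C : EuclideanSpace ℝ (Fin d) → Ω₂ → EuclideanSpace ℝ (Fin d))
    (hCmeas : ∀ z, Measurable (C z))
    (hC : ∀ z, ∫ ω, ‖C z ω - z‖ ^ 2 ∂μ₂ ≤ (1 - α) * ‖z‖ ^ 2)
    (ℒ : EuclideanSpace ℝ (Fin d) → ℝ)
    (hdiff : Differentiable ℝ ℒ)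
    (hLip : ∀ x y, ‖gradient ℒ x - gradient ℒ y‖ ≤ Li * ‖x - y‖)
    (x₀ x v₀ g₀ : EuclideanSpace ℝ (Fin d))
    (s : Ω₁ → EuclideanSpace ℝ (Fin d))
    (hs2 : MemLp s 2 μ₁)
    (hsmean : ∫ ω, s ω ∂μ₁ = gradient ℒ x)
    (hsvar : ∫ ω, ‖s ω - gradient ℒ x‖ ^ 2 ∂μ₁ ≤ σ ^ 2) :
    ∫ ω : Ω₁ × Ω₂,
        ‖(g₀ + C ((1 - η) • v₀ + η • s ω.1 - g₀) ω.2)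
            - ((1 - η) • v₀ + η • s ω.1)‖ ^ 2 ∂(μ₁.prod μ₂) ≤
      (1 - α / 2) * ‖g₀ - v₀‖ ^ 2 + (4 * η ^ 2 / α) * ‖v₀ - gradient ℒ x₀‖ ^ 2
        + (4 * η ^ 2 * Li ^ 2 / α) * ‖x - x₀‖ ^ 2 + (1 - α) * η ^ 2 * σ ^ 2 :=
  stmt_7_general d α η σ Li hα μ₁ μ₂ C hC ℒ hLip x₀ x v₀ g₀ s hs2 hsmean hsvar
end
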